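/- arXiv:2207.14657 — 2 statements merged into one kernel-verified Lean document; each statement's English description precedes it below -/
import Mathlib

section
/- Let C : V → Finset I be an assignment of collision sets to vertices of a finite graph, where I is a finite set of n agents. If each update to the assignment either (a) strictly enlarges C(v) for some vertex v by adding at least one new agent, with the first enlargement at any vertex adding at least two agents, or (b) is one of at most U·n per-vertex bounded 'bypass' modifications, then the total number of updates is at most [(n·U) + (n−1)]·|V|. -/
/-!
Updates of type (b) are charged to their vertex, giving at most `n * U * |V|` of them. The
remaining updates are of type (a), and each raises the potential `∑ v, (|C v| - 1)`, which never
decreases and is bounded by `(n - 1) * |V|`.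
-/

open Finset

theorem Fin.card_filter_castSucc_lt_succ_add_le {T : ℕ} {f : Fin (T + 1) → ℕ} (hf : Monotone f) :
    #{t : Fin T | f t.castSucc < f t.succ} + f 0 ≤ f (Fin.last T) := by
  induction T with
  | zero => simp
  | succ T ih =>
    have htail := ih (hf.comp Fin.strictMono_succ.monotone)
    have hfirst : f 0 ≤ f (Fin.succ 0) := hf (Fin.zero_le _)
    simp only [Function.comp_apply, Fin.succ_last, Nat.succ_eq_add_one, Fin.succ_castSucc] at htail
    rw [Fin.card_filter_univ_succ]
    split_ifs with hstep
    · rw [Fin.castSucc_zero] at hstep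
      omega
    · omega

theorem card_filter_exists_eq_some_le {α β : Type*} [Fintype α] [DecidableEq α] [Fintype β]
    [DecidableEq β] (b : α → Option β) {m : ℕ} (hb : ∀ v, #{t | b t = some v} ≤ m) :
    #{t | ∃ v, b t = some v} ≤ m * Fintype.card β := by
  have hcover : ({t | ∃ v, b t = some v} : Finset α) = univ.biUnion fun v => {t | b t = some v} := by
    ext t
    simp
  rw [hcover, mul_comm]
  exact card_biUnion_le_card_mul _ _ _ fun v _ => hb v

section CollisionPotential

variable {V I : Type*} [Fintype V]

/-- Truncated subtraction is intended: an empty collision set contributes `0`, like a singleton,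
and the first enlargement adds two agents, so every enlargement raises the potential. -/
def collisionPotential (C : V → Finset I) : ℕ :=
  ∑ v, (#(C v) - 1)

theorem collisionPotential_le [Fintype I] (C : V → Finset I) :
    collisionPotential C ≤ (Fintype.card I - 1) * Fintype.card V := by
  calc collisionPotential C ≤ ∑ _v : V, (Fintype.card I - 1) :=
        sum_le_sum fun v _ => Nat.sub_le_sub_right (card_le_univ _) 1
    _ = (Fintype.card I - 1) * Fintype.card V := by simp [mul_comm]

theorem collisionPotential_lt_of_ssubset {C C' : V → Finset I} {v : V} (hsub : C v ⊂ C' v)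
    (hfirst : C v = ∅ → 2 ≤ #(C' v)) (hrest : ∀ w, w ≠ v → C' w = C w) :
    collisionPotential C < collisionPotential C' := by
  have hgrow : #(C v) - 1 < #(C' v) - 1 := by
    have hcard := card_lt_card hsub
    rcases (C v).eq_empty_or_nonempty with hempty | hne
    · have := hfirst hempty
      simp only [hempty, card_empty]
      omega
    · have := hne.card_pos
      omega
  refine sum_lt_sum (fun w _ => ?_) ⟨v, mem_univ v, hgrow⟩
  by_cases hw : w = v
  · exact hw ▸ hgrow.le
  · rw [hrest w hw]

end CollisionPotential

theorem collision_set_update_bound_general {V I : Type*} [Fintype V] [DecidableEq V] [Fintype I]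
    (U T : ℕ) (Cs : Fin (T + 1) → V → Finset I) [DecidableEq I]
    (bypassVertex : Fin T → Option V)
    (hstep : ∀ t : Fin T,
      (∃ v, Cs t.castSucc v ⊂ Cs t.succ v ∧
            (Cs t.castSucc v = ∅ → 2 ≤ (Cs t.succ v).card) ∧
            (∀ w, w ≠ v → Cs t.succ w = Cs t.castSucc w)) ∨
      ((∃ v, bypassVertex t = some v) ∧ Cs t.succ = Cs t.castSucc))
    (hbypass : ∀ v : V,
      (Finset.univ.filter (fun t : Fin T => bypassVertex t = some v)).card
        ≤ Fintype.card I * U) :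
    T ≤ (Fintype.card I * U + (Fintype.card I - 1)) * Fintype.card V := by
  set Φ : Fin (T + 1) → ℕ := fun t => collisionPotential (Cs t)
  have henlarge : ∀ t : Fin T, (¬ ∃ v, bypassVertex t = some v) → Φ t.castSucc < Φ t.succ :=
    fun t hnb => match hstep t with
      | .inl ⟨_, hsub, hfirst, hrest⟩ => collisionPotential_lt_of_ssubset hsub hfirst hrest
      | .inr ⟨hb, _⟩ => absurd hb hnb
  have hmono : Monotone Φ := Fin.monotone_iff_le_succ.2 fun t =>
    match hstep t with
      | .inl ⟨_, hsub, hfirst, hrest⟩ => (collisionPotential_lt_of_ssubset hsub hfirst hrest).le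
      | .inr ⟨_, hsame⟩ => (congrArg collisionPotential hsame).ge
  have hbypassed := card_filter_exists_eq_some_le bypassVertex hbypass
  have henlarged : #{t | ¬ ∃ v, bypassVertex t = some v} ≤ (Fintype.card I - 1) * Fintype.card V :=
    calc #{t | ¬ ∃ v, bypassVertex t = some v}
        ≤ #{t : Fin T | Φ t.castSucc < Φ t.succ} := card_le_card fun t ht => by
          simp only [mem_filter, mem_univ, true_and] at ht ⊢
          exact henlarge t ht
      _ ≤ Φ (Fin.last T) := le_of_add_le_left (Fin.card_filter_castSucc_lt_succ_add_le hmono)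
      _ ≤ _ := collisionPotential_le _
  have hsplit := card_filter_add_card_filter_not (s := (univ : Finset (Fin T)))
    fun t => ∃ v, bypassVertex t = some v
  rw [card_univ, Fintype.card_fin] at hsplit
  rw [add_mul]
  omega

/-- Counting bound from Lemma 3 / Lemma 7: collision-set assignments
`C : V → Finset I` on a finite vertex set, starting all empty, undergo a
sequence of `T` updates.  Each update is either
(a) a strict enlargement of `C v` at a single vertex `v` (all other vertices
unchanged), where the first enlargement at a vertex adds at least two agents, or
(b) a bypass modification attributed to a vertex, with at most `n * U` bypass
modifications per vertex (the assignment being unchanged).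
Then the total number of updates satisfies
`T ≤ (n * U + (n - 1)) * |V|`, where `n = |I|`. -/
theorem collision_set_update_bound {V I : Type*} [Fintype V] [DecidableEq V] [Fintype I]
    (U T : ℕ) (Cs : Fin (T + 1) → V → Finset I) [DecidableEq I]
    (bypassVertex : Fin T → Option V)
    (h0 : ∀ v, Cs 0 v = ∅)
    (hstep : ∀ t : Fin T,
      (∃ v, Cs t.castSucc v ⊂ Cs t.succ v ∧
            (Cs t.castSucc v = ∅ → 2 ≤ (Cs t.succ v).card) ∧
            (∀ w, w ≠ v → Cs t.succ w = Cs t.castSucc w)) ∨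
      ((∃ v, bypassVertex t = some v) ∧ Cs t.succ = Cs t.castSucc))
    (hbypass : ∀ v : V,
      (Finset.univ.filter (fun t : Fin T => bypassVertex t = some v)).card
        ≤ Fintype.card I * U) :
    T ≤ (Fintype.card I * U + (Fintype.card I - 1)) * Fintype.card V :=
  collision_set_update_bound_general U T Cs bypassVertex hstep hbypass
end

section
/- Suppose for every vertex v on a constructed joint path π'' from v_I to v_F, with collision set C(v) and successor chosen along π'_{C(v)}(v, v_F), the inequality cost(π'_{C(v)}(v, succ(v))) + cost(π'_{C(succ(v))}(succ(v), v_F)) ≤ cost(π'_{C(v)}(v, v_F)) holds, and cost(π'_{C(v)}(v, v_F)) ≤ cost(π*(v, v_F)). Then by induction along the path, cost(π''(v_I, v_F)) ≤ cost(π*(v_I, v_F)). -/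
theorem Fin.sum_add_last_le_of_add_succ_le {M : Type*} [AddCommMonoid M] [PartialOrder M]
    [IsOrderedAddMonoid M] : ∀ {L : ℕ} (a : Fin (L + 1) → M) (f : Fin L → M),
    (∀ k : Fin L, f k + a k.succ ≤ a k.castSucc) → ∑ k, f k + a (Fin.last L) ≤ a 0
  | 0, a, f, _ => by simp [Fin.last]
  | L + 1, a, f, h => by
    have htail : ∑ k : Fin L, f k.succ + a (Fin.last (L + 1)) ≤ a 1 :=
      Fin.sum_add_last_le_of_add_succ_le (a ∘ Fin.succ) (f ∘ Fin.succ) fun k : Fin L => h k.succ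
    calc ∑ k, f k + a (Fin.last (L + 1))
        = f 0 + (∑ k : Fin L, f k.succ + a (Fin.last (L + 1))) := by
          rw [Fin.sum_univ_succ, add_assoc]
      _ ≤ f 0 + a 1 := add_le_add_right htail _
      _ ≤ a 0 := h 0

/-- Inequality (5) and the inductive step of Lemma 9.  The path `π''` from
`v_I` to `v_F` visits the vertices `v 0, v 1, …, v L`; `step k` is the cost of
its `k`-th step, i.e. `cost(π'_{C(v k)}(v k, v (k+1)))`; `A w` denotes
`cost(π'_{C(w)}(w, v_F))`, and `Astar w` denotes `cost(π*(w, v_F))`.  If for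
every step `step k + A (v (k+1)) ≤ A (v k)` (which follows from Lemma 8 since
`C(succ v) ⊆ C(v)`), `A w ≤ Astar w` for every vertex, and the combined path
from the final vertex `v L = v_F` to itself has cost `0`, then by induction
along the path `cost(π''(v_I, v_F)) = Σ_k step k ≤ Astar (v_I)`. -/
theorem path_cost_le_optimal_by_induction {V : Type*} {L : ℕ}
    (v : Fin (L + 1) → V) (step : Fin L → ℝ) (A Astar : V → ℝ)
    (hstep : ∀ k : Fin L, step k + A (v k.succ) ≤ A (v k.castSucc))
    (hA : ∀ w, A w ≤ Astar w)
    (hend : A (v (Fin.last L)) = 0) :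
    ∑ k, step k ≤ Astar (v 0) := by
  have htelescope := Fin.sum_add_last_le_of_add_succ_le (A ∘ v) step hstep
  rw [Function.comp_apply, hend, add_zero] at htelescope
  exact htelescope.trans (hA _)
end
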